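/- For every integer n ≥ 3, the multiset of eigenvalues of the adjacency matrix of (S̄_{n,n})⁺ (a graph on 2n vertices) consists of n−1+√(n²−3n+3), n−1−√(n²−3n+3), −1+√(n−1), −1−√(n−1), together with −1 with multiplicity 2n−4. Equivalently, the characteristic polynomial of the adjacency matrix of (S̄_{n,n})⁺ equals (x² − (2n−2)x + (n−2))·(x² + 2x − (n−2))·(x+1)^{2n−4}. -/

import Mathlib

open Polynomial

/-- Adjacency matrix of a simple graph over ℝ (using classical decidability). -/
noncomputable def adjMat {V : Type*} [Fintype V] (G : SimpleGraph V) : Matrix V V ℝ :=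
  letI := Classical.decRel G.Adj
  SimpleGraph.adjMatrix ℝ G

/-- The double star `S_{n,n}`: two stars `K_{1,n-1}` with centers `Sum.inl none` and
`Sum.inr none`, joined by an edge between the two centers. It has `2n` vertices when `n ≥ 1`. -/
def doubleStar (n : ℕ) : SimpleGraph (Option (Fin (n - 1)) ⊕ Option (Fin (n - 1))) :=
  SimpleGraph.fromRel (fun a b =>
    (a = Sum.inl none ∧ ∃ i, b = Sum.inl (some i)) ∨
    (a = Sum.inr none ∧ ∃ i, b = Sum.inr (some i)) ∨
    (a = Sum.inl none ∧ b = Sum.inr none))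

/-- `(S̄_{n,n})⁺`: the complement of the double star with the edge `v₁v₂` between the two
centers added. -/
def doubleStarCompPlus (n : ℕ) :
    SimpleGraph (Option (Fin (n - 1)) ⊕ Option (Fin (n - 1))) :=
  (doubleStar n)ᶜ ⊔ SimpleGraph.fromEdgeSet {s(Sum.inl none, Sum.inr none)}

/-!
Off the diagonal, the adjacency matrix of `(S̄_{n,n})⁺` only depends on which of the four cells
`{v₁}`, leaves of `v₁`, `{v₂}`, leaves of `v₂` the two vertices lie in, so `A = P M Pᵀ - 1` with
`P` the vertex–cell incidence matrix and `M` a 0/1 pattern on the cells. As `XY` and `YX` have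
the same characteristic polynomial up to a power of `X`, the spectrum of `A` is that of the 4×4
quotient matrix `M PᵀP - 1`, where `PᵀP = diag(1, n-1, 1, n-1)`, together with `-1` of
multiplicity `2n - 4`.
-/

namespace Matrix

variable {R : Type*} [CommRing R] {m k : Type*} [Fintype m] [DecidableEq m] [Fintype k]
  [DecidableEq k]

theorem charpoly_sub_one (A : Matrix m m R) : (A - 1).charpoly = A.charpoly.comp (X + 1) := by
  simpa using charpoly_sub_scalar A 1

theorem charpoly_mul_sub_one_of_le (U : Matrix m k R) (B : Matrix k m R)
    (h : Fintype.card k ≤ Fintype.card m) :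
    (U * B - 1).charpoly =
      (X + 1) ^ (Fintype.card m - Fintype.card k) * (B * U - 1).charpoly := by
  rw [charpoly_sub_one, charpoly_sub_one, charpoly_mul_comm_of_le U B h, mul_comp, X_pow_comp]

omit [Fintype m] [DecidableEq m] in
theorem submatrix_eq_one_submatrix_mul_mul (M : Matrix k k R) (f : m → k) :
    M.submatrix f f =
      (1 : Matrix k k R).submatrix f id * (M * (1 : Matrix k k R).submatrix id f) := by
  ext u v
  simp [mul_apply, one_apply]

omit [DecidableEq m] [Fintype k] in
theorem one_submatrix_mul_one_submatrix (f : m → k) :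
    (1 : Matrix k k R).submatrix id f * (1 : Matrix k k R).submatrix f id =
      diagonal fun i => ((Finset.univ.filter fun v => f v = i).card : R) := by
  ext i j
  by_cases h : i = j
  · subst h
    simp +contextual [mul_apply, one_apply, eq_comm (a := i)]
  · simp +contextual [mul_apply, one_apply, h]

theorem charpoly_submatrix_sub_one (M : Matrix k k R) (f : m → k)
    (h : Fintype.card k ≤ Fintype.card m) :
    (M.submatrix f f - 1).charpoly = (X + 1) ^ (Fintype.card m - Fintype.card k) *
      (M * diagonal (fun i => ((Finset.univ.filter fun v => f v = i).card : R)) - 1).charpoly := by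
  rw [submatrix_eq_one_submatrix_mul_mul, charpoly_mul_sub_one_of_le _ _ h, Matrix.mul_assoc,
    one_submatrix_mul_one_submatrix]

end Matrix

namespace Polynomial

theorem X_sq_sub_C_mul_X_add_C_eq_mul {R : Type*} [CommRing R] (b c s : R)
    (hs : s ^ 2 = b ^ 2 - c) :
    X ^ 2 - C (2 * b) * X + C c = (X - C (b + s)) * (X - C (b - s)) := by
  obtain rfl : c = b ^ 2 - s ^ 2 := by linear_combination hs
  simp only [map_sub, map_add, map_mul, map_pow, map_ofNat]
  ring

end Polynomial

open Matrix

theorem charpoly_doubleStarQuotient {R : Type*} [CommRing R] (m : R) :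
    (!![1, 0, 1, 1; 0, 1, 1, 1; 1, 1, 1, 0; 1, 1, 0, 1] * diagonal ![1, m, 1, m] - 1).charpoly =
      (X ^ 2 - C (2 * m) * X + C (m - 1)) * (X ^ 2 + 2 * X - C (m - 1)) := by
  have hquot : (!![1, 0, 1, 1; 0, 1, 1, 1; 1, 1, 1, 0; 1, 1, 0, 1] * diagonal ![1, m, 1, m] - 1 :
      Matrix (Fin 4) (Fin 4) R) = !![0, 0, 1, m; 0, m - 1, 1, m; 1, m, 0, 0; 1, m, 0, m - 1] := by
    ext i j
    simp only [Matrix.sub_apply, mul_diagonal, one_apply]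
    fin_cases i <;> fin_cases j <;> simp
  rw [hquot, charpoly, det_succ_row_zero]
  simp [Fin.sum_univ_succ, det_fin_three, charmatrix_apply, Fin.succAbove, map_ofNat]
  ring

def doubleStarCell (n : ℕ) : Option (Fin (n - 1)) ⊕ Option (Fin (n - 1)) → Fin 4 :=
  Sum.elim (fun o => o.elim 0 fun _ => 1) (fun o => o.elim 2 fun _ => 3)

theorem adjMat_doubleStarCompPlus (n : ℕ) :
    adjMat (doubleStarCompPlus n) =
      (!![1, 0, 1, 1; 0, 1, 1, 1; 1, 1, 1, 0; 1, 1, 0, 1] : Matrix (Fin 4) (Fin 4) ℝ).submatrix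
        (doubleStarCell n) (doubleStarCell n) - 1 := by
  ext u v
  simp only [adjMat, SimpleGraph.adjMatrix_apply, Matrix.sub_apply, submatrix_apply, one_apply]
  obtain (_ | p) | (_ | p) := u <;> obtain (_ | q) | (_ | q) := v <;>
    simp [doubleStarCompPlus, doubleStar, doubleStarCell, SimpleGraph.fromRel_adj] <;>
    split_ifs <;> norm_num

theorem card_filter_doubleStarCell (n : ℕ) (hn : 1 ≤ n) :
    (fun i => ((Finset.univ.filter fun v => doubleStarCell n v = i).card : ℝ)) =
      ![1, (n : ℝ) - 1, 1, (n : ℝ) - 1] := by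
  funext i
  simp only [Finset.card_filter]
  fin_cases i <;> simp [Fintype.sum_sum_type, Fintype.sum_option, doubleStarCell, hn]

theorem charpoly_adjMat_doubleStarCompPlus (n : ℕ) (hn : 2 ≤ n) :
    (adjMat (doubleStarCompPlus n)).charpoly =
      (X ^ 2 - C (2 * (n : ℝ) - 2) * X + C ((n : ℝ) - 2)) *
      (X ^ 2 + 2 * X - C ((n : ℝ) - 2)) * (X + 1) ^ (2 * n - 4) := by
  have hcard : Fintype.card (Option (Fin (n - 1)) ⊕ Option (Fin (n - 1))) = 2 * n := by
    simp only [Fintype.card_sum, Fintype.card_option, Fintype.card_fin]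
    omega
  rw [adjMat_doubleStarCompPlus, charpoly_submatrix_sub_one _ _ (by simp [hcard]; omega),
    card_filter_doubleStarCell n (by omega), charpoly_doubleStarQuotient, hcard,
    Fintype.card_fin, show 2 * ((n : ℝ) - 1) = 2 * n - 2 by ring,
    show (n : ℝ) - 1 - 1 = n - 2 by ring]
  ring

/-- For every `n ≥ 3`, the multiset of adjacency eigenvalues of
`(S̄_{n,n})⁺` consists of `n - 1 ± √(n² - 3n + 3)` and `-1 ± √(n-1)`, together with `-1`
with multiplicity `2n - 4`; equivalently, its characteristic polynomial is
`(x² - (2n-2)x + (n-2)) (x² + 2x - (n-2)) (x+1)^(2n-4)`. -/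
theorem doubleStarCompPlus_spectrum (n : ℕ) (hn : 3 ≤ n) :
    (adjMat (doubleStarCompPlus n)).charpoly.roots =
      ({(n : ℝ) - 1 + Real.sqrt ((n : ℝ) ^ 2 - 3 * (n : ℝ) + 3),
        (n : ℝ) - 1 - Real.sqrt ((n : ℝ) ^ 2 - 3 * (n : ℝ) + 3),
        -1 + Real.sqrt ((n : ℝ) - 1),
        -1 - Real.sqrt ((n : ℝ) - 1)} +
       Multiset.replicate (2 * n - 4) (-1 : ℝ)) ∧
    (adjMat (doubleStarCompPlus n)).charpoly =
      (X ^ 2 - C (2 * (n : ℝ) - 2) * X + C ((n : ℝ) - 2)) *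
      (X ^ 2 + 2 * X - C ((n : ℝ) - 2)) * (X + 1) ^ (2 * n - 4) := by
  have hcharpoly := charpoly_adjMat_doubleStarCompPlus n (by omega)
  refine ⟨?_, hcharpoly⟩
  have hn_real : (3 : ℝ) ≤ n := by exact_mod_cast hn
  set s := √((n : ℝ) ^ 2 - 3 * n + 3)
  set t := √((n : ℝ) - 1)
  have hfirst : X ^ 2 - C (2 * (n : ℝ) - 2) * X + C ((n : ℝ) - 2) =
      (X - C (n - 1 + s)) * (X - C (n - 1 - s)) := by
    rw [← X_sq_sub_C_mul_X_add_C_eq_mul ((n : ℝ) - 1) (n - 2) s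
      (by rw [Real.sq_sqrt (by nlinarith)]; ring), show 2 * ((n : ℝ) - 1) = 2 * n - 2 by ring]
  have hsecond : X ^ 2 + 2 * X - C ((n : ℝ) - 2) = (X - C (-1 + t)) * (X - C (-1 - t)) := by
    rw [← X_sq_sub_C_mul_X_add_C_eq_mul (-1 : ℝ) (-(n - 2)) t
      (by rw [Real.sq_sqrt (by linarith)]; ring)]
    simp only [map_neg, map_mul, map_one, map_ofNat]
    ring
  rw [hcharpoly, hfirst, hsecond, ← roots_multiset_prod_X_sub_C (_ + _)]
  simp [mul_assoc]
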